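/- For n ≥ 2, let A_n := J_n − I_n ∈ M_n(ℂ), where J_n is the n×n all-ones matrix and I_n the identity. Then N(A_n²)/(γ · N(A_n)²) = (1 − (σ²/(σ²+μ²)) · (2n−3)/(n(n−1)))^{1/2}, and consequently N(A_n²)/(γ · N(A_n)²) → 1 as n → ∞. -/

import Mathlib

/-!
Writing `J` for the all-ones matrix, `J² = nJ` gives `A² = (n - 2)J + 1` for `A = J - 1`, so both
`A` and `A²` have one constant on the diagonal and another off it. For such a matrix `N²` is an
explicit polynomial in `n`; the squared ratio simplifies to
`(σ²(n² - 3n + 3) + μ² n(n - 1)) / ((σ² + μ²) n(n - 1))`, which is the claimed expression since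
`n² - 3n + 3 = n(n - 1) - (2n - 3)`.
-/

open Matrix

/-- The Frobenius norm of a complex matrix. -/
noncomputable def frobNorm {n : ℕ} (A : Matrix (Fin n) (Fin n) ℂ) : ℝ :=
  Real.sqrt (∑ i, ∑ j, ‖A i j‖ ^ 2)

/-- The norm `N(Z) = ((1/2)σ²‖Z‖_F² + (1/2)μ²|tr Z|²)^(1/2)` on `M_n(ℂ)`. -/
noncomputable def N2 (σ μ : ℝ) {n : ℕ} (Z : Matrix (Fin n) (Fin n) ℂ) : ℝ :=
  Real.sqrt ((1 / 2) * σ ^ 2 * frobNorm Z ^ 2 + (1 / 2) * μ ^ 2 * ‖Z.trace‖ ^ 2)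

/-- The all-ones matrix `J_n`. -/
def Jmat (n : ℕ) : Matrix (Fin n) (Fin n) ℂ := Matrix.of fun _ _ => 1

open Filter Topology

lemma sq_frobNorm {n : ℕ} (A : Matrix (Fin n) (Fin n) ℂ) :
    frobNorm A ^ 2 = ∑ i, ∑ j, ‖A i j‖ ^ 2 :=
  Real.sq_sqrt (by positivity)

lemma sq_N2 (σ μ : ℝ) {n : ℕ} (Z : Matrix (Fin n) (Fin n) ℂ) :
    N2 σ μ Z ^ 2 = (1 / 2) * σ ^ 2 * frobNorm Z ^ 2 + (1 / 2) * μ ^ 2 * ‖Z.trace‖ ^ 2 :=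
  Real.sq_sqrt (by positivity)

lemma sq_frobNorm_of_ite {n : ℕ} (a b : ℂ) :
    frobNorm (Matrix.of fun i j : Fin n => if i = j then a else b) ^ 2 =
      n * ‖a‖ ^ 2 + ((n : ℝ) ^ 2 - n) * ‖b‖ ^ 2 := by
  have h : ∀ i j : Fin n, ‖if i = j then a else b‖ ^ 2 =
      ‖b‖ ^ 2 + if i = j then ‖a‖ ^ 2 - ‖b‖ ^ 2 else 0 := by
    intro i j; split_ifs <;> ring
  simp only [sq_frobNorm, of_apply, h, Finset.sum_add_distrib, Finset.sum_ite_eq,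
    Finset.mem_univ, if_true, Finset.sum_const, Finset.card_univ, Fintype.card_fin, nsmul_eq_mul]
  ring

lemma trace_of_ite {n : ℕ} (a b : ℂ) :
    (Matrix.of fun i j : Fin n => if i = j then a else b).trace = n * a := by
  simp [Matrix.trace]

lemma Jmat_mul_self (n : ℕ) : Jmat n * Jmat n = (n : ℂ) • Jmat n := by
  ext i j
  simp [Jmat, Matrix.mul_apply]

lemma Jmat_sub_one_eq (n : ℕ) :
    Jmat n - 1 = Matrix.of fun i j => if i = j then (0 : ℂ) else 1 := by
  ext i j
  simp only [Jmat, Matrix.sub_apply, of_apply, Matrix.one_apply]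
  split_ifs <;> simp

lemma Jmat_sub_one_mul_self_eq (n : ℕ) :
    (Jmat n - 1) * (Jmat n - 1) = Matrix.of fun i j => if i = j then (n : ℂ) - 1 else n - 2 := by
  have h : (Jmat n - 1) * (Jmat n - 1) = ((n : ℂ) - 2) • Jmat n + 1 := by
    rw [sub_mul, mul_sub, mul_sub, Jmat_mul_self, mul_one, one_mul, mul_one, sub_smul]
    module
  ext i j
  rw [h]
  simp only [Jmat, smul_of, Matrix.add_apply, of_apply, Pi.smul_apply, smul_eq_mul, mul_one,
    Matrix.one_apply]
  split_ifs <;> ring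

lemma sq_N2_Jmat_sub_one (σ μ : ℝ) (n : ℕ) :
    N2 σ μ (Jmat n - 1) ^ 2 = σ ^ 2 * ((n : ℝ) ^ 2 - n) / 2 := by
  rw [sq_N2, Jmat_sub_one_eq, sq_frobNorm_of_ite, trace_of_ite, mul_zero, norm_zero, norm_one]
  ring

lemma sq_N2_Jmat_sub_one_mul_self (σ μ : ℝ) {n : ℕ} (hn : 2 ≤ n) :
    N2 σ μ ((Jmat n - 1) * (Jmat n - 1)) ^ 2 =
      σ ^ 2 * (n * ((n : ℝ) - 1) ^ 2 + ((n : ℝ) ^ 2 - n) * ((n : ℝ) - 2) ^ 2) / 2 +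
        μ ^ 2 * ((n : ℝ) * (n - 1)) ^ 2 / 2 := by
  have hn' : (2 : ℝ) ≤ n := by exact_mod_cast hn
  have h1 : ‖(n : ℂ) - 1‖ = (n : ℝ) - 1 := by
    rw [show (n : ℂ) - 1 = ((n - 1 : ℝ) : ℂ) by push_cast; ring, Complex.norm_real,
      Real.norm_of_nonneg (by linarith)]
  have h2 : ‖(n : ℂ) - 2‖ = (n : ℝ) - 2 := by
    rw [show (n : ℂ) - 2 = ((n - 2 : ℝ) : ℂ) by push_cast; ring, Complex.norm_real,
      Real.norm_of_nonneg (by linarith)]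
  rw [sq_N2, Jmat_sub_one_mul_self_eq, sq_frobNorm_of_ite, trace_of_ite, norm_mul, h1, h2, RCLike.norm_natCast]
  ring

lemma Jmat_sub_one_ratio_eq (σ μ : ℝ) (hσ : 0 < σ) {n : ℕ} (hn : 2 ≤ n) :
    N2 σ μ ((Jmat n - 1) * (Jmat n - 1)) /
        (Real.sqrt (2 * σ ^ 2 + 2 * μ ^ 2) / σ ^ 2 * N2 σ μ (Jmat n - 1) ^ 2) =
      Real.sqrt (1 - σ ^ 2 / (σ ^ 2 + μ ^ 2) * ((2 * (n : ℝ) - 3) / (n * (n - 1)))) := by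
  have hn' : (2 : ℝ) ≤ n := by exact_mod_cast hn
  have hnum : 0 ≤ N2 σ μ ((Jmat n - 1) * (Jmat n - 1)) := Real.sqrt_nonneg _
  refine (Real.sqrt_sq (div_nonneg hnum (by positivity))).symm.trans ?_
  rw [div_pow, mul_pow, div_pow, sq_N2_Jmat_sub_one_mul_self σ μ hn, sq_N2_Jmat_sub_one,
    Real.sq_sqrt (by positivity)]
  congr 1
  have : 0 < σ ^ 2 + μ ^ 2 := by positivity
  have : (n : ℝ) - 1 ≠ 0 := by linarith
  field_simp
  ring

lemma tendsto_div_mul_sub_one_zero :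
    Tendsto (fun n : ℕ => (2 * (n : ℝ) - 3) / (n * (n - 1))) atTop (𝓝 0) := by
  have h : Tendsto (fun n : ℕ => (2 - 3 / (n : ℝ)) * ((n : ℝ) - 1)⁻¹) atTop (𝓝 ((2 - 0) * 0)) :=
    (tendsto_const_nhds.sub (tendsto_const_div_atTop_nhds_zero_nat 3)).mul
      (tendsto_inv_atTop_zero.comp (tendsto_atTop_add_const_right _ (-1) tendsto_natCast_atTop_atTop))
  rw [mul_zero] at h
  refine h.congr' ?_
  filter_upwards [eventually_ge_atTop 2] with n hn
  have : (2 : ℝ) ≤ n := by exact_mod_cast hn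
  field_simp

/-- For `A_n = J_n − I_n` and `n ≥ 2`:
`N(A_n²)/(γ N(A_n)²) = (1 − (σ²/(σ²+μ²))(2n−3)/(n(n−1)))^{1/2}`, and this ratio tends
to `1` as `n → ∞`. -/
theorem ratio_formula_and_limit (σ μ : ℝ) (hσ : 0 < σ)
    (γ : ℝ) (hγ : γ = Real.sqrt (2 * σ ^ 2 + 2 * μ ^ 2) / σ ^ 2) :
    (∀ n : ℕ, 2 ≤ n →
      N2 σ μ ((Jmat n - 1) * (Jmat n - 1)) / (γ * N2 σ μ (Jmat n - 1) ^ 2) =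
        Real.sqrt (1 - σ ^ 2 / (σ ^ 2 + μ ^ 2) *
          ((2 * (n : ℝ) - 3) / ((n : ℝ) * ((n : ℝ) - 1))))) ∧
    Filter.Tendsto
      (fun n : ℕ =>
        N2 σ μ ((Jmat n - 1) * (Jmat n - 1)) / (γ * N2 σ μ (Jmat n - 1) ^ 2))
      Filter.atTop (nhds 1) := by
  subst hγ
  refine ⟨fun n hn => Jmat_sub_one_ratio_eq σ μ hσ hn, ?_⟩
  have hlim := ((tendsto_const_nhds (x := (1 : ℝ))).sub
    ((tendsto_const_nhds (x := σ ^ 2 / (σ ^ 2 + μ ^ 2))).mul tendsto_div_mul_sub_one_zero)).sqrt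
  rw [mul_zero, sub_zero, Real.sqrt_one] at hlim
  refine hlim.congr' ?_
  filter_upwards [eventually_ge_atTop 2] with n hn
  exact (Jmat_sub_one_ratio_eq σ μ hσ hn).symm
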